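/- arXiv:2511.11278 — 2 statements merged into one kernel-verified Lean document; each statement's English description precedes it below -/
import Mathlib

section
/- For every n ≥ 3 and every preference profile ≻, the assignment produced by the NPB Active Player Draft mechanism is a derangement that is CE-efficient at ≻. -/
open scoped Classical

/-- Each division has a strict linear (total) preference order over workers. -/
def StrictProfile {α : Type*} (pref : α → α → α → Prop) : Prop :=
  ∀ i, IsStrictTotalOrder α (pref i)

/-- `pref'` is an improvement for division `i` with respect to `pref`. -/
def Improvement {α : Type*} (pref pref' : α → α → α → Prop) (i : α) : Prop :=
  pref' i = pref i ∧
  (∀ j, j ≠ i → ∀ k, k ≠ i → pref j i k → pref' j i k) ∧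
  (∀ j, j ≠ i → ∀ k, k ≠ i → ∀ l, l ≠ i → (pref j k l ↔ pref' j k l))

/-- The `r`-maximum element of the finite set `s` (chosen via Hilbert choice):
the element of `s` that `r`-beats every other element of `s`. -/
noncomputable def pick {α : Type*} [Nonempty α] (r : α → α → Prop) (s : Finset α) : α :=
  Classical.epsilon fun m => m ∈ s ∧ ∀ x ∈ s, x ≠ m → r m x

/-- `μ` is CE-efficient at `pref`: no derangement (complete-exchange assignment)
`μ'` weakly improves every division and strictly improves some division. -/
def CEEfficientAt {α : Type*} (pref : α → α → α → Prop) (μ : α → α) : Prop :=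
  ¬ ∃ μ' : α → α, Function.Bijective μ' ∧ (∀ i, μ' i ≠ i) ∧
      (∀ i, μ' i = μ i ∨ pref i (μ' i) (μ i)) ∧ (∃ j, pref j (μ' j) (μ j))

/-- An arbitrary element of `s` (via choice); used for the last-two rule where the
relevant set is a singleton. -/
noncomputable def theElem {α : Type*} [Nonempty α] (s : Finset α) : α :=
  Classical.epsilon (· ∈ s)

/-- One selection step of the NPB Active Player Draft.  `cur` is the club whose turn
it is, `R` the clubs without a selection yet (including `cur`), `A` the available
players, `μ` the partial assignment.  If exactly two clubs remain, `cur` must select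
the other remaining club's listed player (last-two rule); otherwise if `cur`'s voted
player is available it must select it (vote-binding); otherwise it selects its most
preferred available player other than its own.  The next mover is the owner of the
selected player if that club has not yet selected (owner-call), and otherwise the
draft-priority-maximal club without a selection (fallback). -/
noncomputable def npbStep {n : ℕ} [NeZero n] (pref : Fin n → Fin n → Fin n → Prop)
    (dprio : Fin n → Fin n → Prop) (vote : Fin n → Fin n) :
    ℕ → Fin n → Finset (Fin n) → Finset (Fin n) → (Fin n → Fin n) → (Fin n → Fin n)
  | 0, _, _, _, μ => μ
  | fuel + 1, cur, R, A, μ =>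
    let w : Fin n :=
      if R.card = 2 then theElem (R.erase cur)
      else if vote cur ∈ A then vote cur
      else pick (pref cur) (A.erase cur)
    let R' := R.erase cur
    let next := if w ∈ R' then w else pick dprio R'
    npbStep pref dprio vote fuel next R' (A.erase w) (Function.update μ cur w)

/-- The NPB Active Player Draft mechanism on clubs `{1, …, n}` (identified with
`Fin n`, each club listing its own player) with exogenous tie-break order
`1 ▷ 2 ▷ ⋯ ▷ n`.  Each club votes for its most preferred player other than its own;
the draft-priority ranks clubs by the number of votes their listed player received,
ties broken by the exogenous order; then clubs select sequentially starting from the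
draft-priority-maximal club. -/
noncomputable def npb {n : ℕ} [NeZero n]
    (pref : Fin n → Fin n → Fin n → Prop) : Fin n → Fin n :=
  let vote : Fin n → Fin n := fun i => pick (pref i) (Finset.univ.erase i)
  let votes : Fin n → ℕ := fun c => (Finset.univ.filter fun i => vote i = c).card
  let dprio : Fin n → Fin n → Prop :=
    fun i j => votes j < votes i ∨ (votes i = votes j ∧ i < j)
  npbStep pref dprio vote n (pick dprio Finset.univ) Finset.univ Finset.univ
    (fun a => a)


lemma npbStep_succ {n : ℕ} [NeZero n] (pref : Fin n → Fin n → Fin n → Prop)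
    (dprio : Fin n → Fin n → Prop) (vote : Fin n → Fin n)
    (fuel : ℕ) (cur : Fin n) (R A : Finset (Fin n)) (μ : Fin n → Fin n) :
    npbStep pref dprio vote (fuel + 1) cur R A μ =
    (let w : Fin n :=
      if R.card = 2 then theElem (R.erase cur)
      else if vote cur ∈ A then vote cur
      else pick (pref cur) (A.erase cur)
    let R' := R.erase cur
    let next := if w ∈ R' then w else pick dprio R'
    npbStep pref dprio vote fuel next R' (A.erase w) (Function.update μ cur w)) := rfl

lemma exists_sto_max {α : Type*} (r : α → α → Prop) (hr : IsStrictTotalOrder α r)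
    (s : Finset α) (hs : s.Nonempty) : ∃ m ∈ s, ∀ x ∈ s, x ≠ m → r m x := by
  classical
  induction s using Finset.induction with
  | empty => exact absurd hs (by simp)
  | insert a s ha ih =>
    rcases s.eq_empty_or_nonempty with h | h
    · subst h; exact ⟨a, by simp, by simp⟩
    · obtain ⟨m, hm, hmax⟩ := ih h
      have hne : a ≠ m := fun h' => ha (h' ▸ hm)
      rcases (haveI := hr; trichotomous_of r a m) with h1 | h1 | h1
      · refine ⟨a, by simp, ?_⟩
        intro x hx hxa
        rcases Finset.mem_insert.1 hx with rfl | hx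
        · exact absurd rfl hxa
        · by_cases hxm : x = m
          · exact hxm ▸ h1
          · exact hr.trans _ _ _ h1 (hmax x hx hxm)
      · exact absurd h1 hne
      · refine ⟨m, Finset.mem_insert_of_mem hm, ?_⟩
        intro x hx hxm
        rcases Finset.mem_insert.1 hx with rfl | hx
        · exact h1
        · exact hmax x hx hxm

lemma pick_spec {α : Type*} [Nonempty α] (r : α → α → Prop) (s : Finset α)
    (h : ∃ m ∈ s, ∀ x ∈ s, x ≠ m → r m x) :
    pick r s ∈ s ∧ ∀ x ∈ s, x ≠ pick r s → r (pick r s) x := by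
  have := Classical.epsilon_spec (p := fun m => m ∈ s ∧ ∀ x ∈ s, x ≠ m → r m x)
    (by obtain ⟨m, hm, h2⟩ := h; exact ⟨m, hm, h2⟩)
  exact this

lemma theElem_singleton {α : Type*} [Nonempty α] (d : α) :
    theElem ({d} : Finset α) = d := by
  have := Classical.epsilon_spec (p := (· ∈ ({d} : Finset α)))
    ⟨d, Finset.mem_singleton_self d⟩
  simpa [theElem] using this

lemma npb_key {n : ℕ} [NeZero n] (pref : Fin n → Fin n → Fin n → Prop)
    (hpref : ∀ i, IsStrictTotalOrder (Fin n) (pref i))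
    (dprio : Fin n → Fin n → Prop)
    (hd : ∀ s : Finset (Fin n), s.Nonempty → ∃ m ∈ s, ∀ x ∈ s, x ≠ m → dprio m x)
    (vote : Fin n → Fin n)
    (hvote : ∀ i, vote i ≠ i ∧ ∀ x, x ≠ i → x ≠ vote i → pref i (vote i) x) :
    ∀ fuel (cur : Fin n) (R A : Finset (Fin n)) (μ : Fin n → Fin n),
      R.card = fuel → A.card = fuel → (0 < fuel → cur ∈ R) →
      (∀ j ∈ R, j ≠ cur → j ∈ A) → (fuel = 1 → cur ∉ A) →
      (∀ j, j ∉ R → μ j ∉ A ∧ μ j ≠ j) →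
      (∀ j k, j ∉ R → k ∉ R → μ j = μ k → j = k) →
      (∀ a, a ∉ A → ∃ j, j ∉ R ∧ μ j = a) →
      Function.Bijective (npbStep pref dprio vote fuel cur R A μ) ∧
      (∀ i, npbStep pref dprio vote fuel cur R A μ i ≠ i) ∧
      (∀ j, j ∉ R → npbStep pref dprio vote fuel cur R A μ j = μ j) ∧
      (∀ μ' : Fin n → Fin n, Function.Bijective μ' → (∀ i, μ' i ≠ i) →
        (∀ i, μ' i = npbStep pref dprio vote fuel cur R A μ i ∨
          pref i (μ' i) (npbStep pref dprio vote fuel cur R A μ i)) →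
        (∀ j, j ∉ R → μ' j = μ j) → μ' = npbStep pref dprio vote fuel cur R A μ) := by
  intro fuel
  induction fuel with
  | zero =>
    intro cur R A μ hR hA _ _ _ h4 h5 h6
    have hRe : R = ∅ := Finset.card_eq_zero.mp hR
    have hAe : A = ∅ := Finset.card_eq_zero.mp hA
    subst hRe; subst hAe
    have hstep : npbStep pref dprio vote 0 cur ∅ ∅ μ = μ := rfl
    rw [hstep]
    have hinj : Function.Injective μ := fun a b hab =>
      h5 a b (Finset.notMem_empty a) (Finset.notMem_empty b) hab
    refine ⟨(Finite.injective_iff_bijective).mp hinj, ?_, ?_, ?_⟩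
    · exact fun i => (h4 i (Finset.notMem_empty i)).2
    · exact fun j _ => rfl
    · intro μ' _ _ _ hag
      funext j; exact hag j (Finset.notMem_empty j)
  | succ fuel ih =>
    intro cur R A μ hR hA hcur0 h3 h1A h4 h5 h6
    have hcur : cur ∈ R := hcur0 (Nat.succ_pos _)
    rw [npbStep_succ]
    set w : Fin n := (if R.card = 2 then theElem (R.erase cur)
      else if vote cur ∈ A then vote cur
      else pick (pref cur) (A.erase cur)) with hw
    set R' : Finset (Fin n) := R.erase cur with hR'
    set cur' : Fin n := if w ∈ R' then w else pick dprio R' with hcur'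
    set A' : Finset (Fin n) := A.erase w with hA'
    set μ₁ : Fin n → Fin n := Function.update μ cur w with hμ₁
    -- generic: any bijection agreeing off R sends members of R into A
    have hμ'A : ∀ μ' : Fin n → Fin n, Function.Injective μ' →
        (∀ j, j ∉ R → μ' j = μ j) → ∀ j ∈ R, μ' j ∈ A := by
      intro μ' hinj hag j hj
      by_contra hno
      obtain ⟨k, hkR, hk⟩ := h6 _ hno
      have : μ' k = μ' j := by rw [hag k hkR, hk]
      exact hkR (hinj this ▸ hj)
    -- the big case split
    have key : (w ∈ A ∧ w ≠ cur) ∧ (fuel = 1 → cur' ∉ A') ∧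
        (∀ μ' : Fin n → Fin n, Function.Bijective μ' → (∀ i, μ' i ≠ i) →
          (μ' cur = w ∨ pref cur (μ' cur) w) → (∀ j, j ∉ R → μ' j = μ j) →
          μ' cur = w) := by
      by_cases h2 : R.card = 2
      · -- last-two rule case
        have hfuel1 : fuel = 1 := by omega
        obtain ⟨d, hdR⟩ : ∃ d, R.erase cur = {d} := Finset.card_eq_one.1
          (by rw [Finset.card_erase_of_mem hcur, h2])
        have hwd : w = d := by
          rw [hw, if_pos h2, hR', hdR, theElem_singleton]
        have hdmem : d ∈ R.erase cur := by rw [hdR]; exact Finset.mem_singleton_self d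
        have hdRmem : d ∈ R := Finset.mem_of_mem_erase hdmem
        have hdne : d ≠ cur := Finset.ne_of_mem_erase hdmem
        have hdA : d ∈ A := h3 d hdRmem hdne
        refine ⟨⟨hwd ▸ hdA, hwd ▸ hdne⟩, ?_, ?_⟩
        · intro _
          have : cur' = d := by
            rw [hcur', if_pos (show w ∈ R' from by rw [hR', hwd]; exact hdmem)]
            exact hwd
          rw [this, hA', hwd]
          exact Finset.notMem_erase d A
        · intro μ' hbij hder _ hag
          have hc : μ' cur ∈ A := hμ'A μ' hbij.1 hag cur hcur
          have hdval : μ' d ∈ A := hμ'A μ' hbij.1 hag d hdRmem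
          have h1 : μ' cur ≠ cur := hder cur
          have h2' : μ' d ≠ d := hder d
          have h3' : μ' cur ≠ μ' d := fun h => hdne.symm (hbij.1 h)
          rw [hwd]
          by_contra hne
          have hsub : ({d, μ' cur, μ' d} : Finset (Fin n)) ⊆ A := by
            intro x hx
            simp only [Finset.mem_insert, Finset.mem_singleton] at hx
            rcases hx with rfl | rfl | rfl
            · exact hdA
            · exact hc
            · exact hdval
          have hcard : ({d, μ' cur, μ' d} : Finset (Fin n)).card = 3 := by
            rw [Finset.card_insert_of_notMem, Finset.card_insert_of_notMem,
              Finset.card_singleton]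
            · simp [h3']
            · simp only [Finset.mem_insert, Finset.mem_singleton]
              push_neg
              exact ⟨fun h => hne h.symm, fun h => h2' h.symm⟩
          have hle := Finset.card_le_card hsub
          rw [hcard, hA] at hle
          omega
      · -- greedy case
        have hfne : fuel ≠ 1 := by omega
        have hAne : (A.erase cur).Nonempty := by
          by_cases hcA : cur ∈ A
          · have hf0 : fuel ≠ 0 := by
              intro h; exact (h1A (by omega)) hcA
            rw [← Finset.card_pos, Finset.card_erase_of_mem hcA, hA]
            omega
          · rw [Finset.erase_eq_of_notMem hcA, ← Finset.card_pos, hA]; omega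
        have hwspec : w ∈ A.erase cur ∧ ∀ x ∈ A.erase cur, x ≠ w → pref cur w x := by
          rw [hw, if_neg h2]
          by_cases hv : vote cur ∈ A
          · rw [if_pos hv]
            refine ⟨Finset.mem_erase.2 ⟨(hvote cur).1, hv⟩, ?_⟩
            intro x hx hxw
            exact (hvote cur).2 x (Finset.ne_of_mem_erase hx) hxw
          · rw [if_neg hv]
            exact pick_spec _ _ (exists_sto_max _ (hpref cur) _ hAne)
        refine ⟨⟨Finset.mem_of_mem_erase hwspec.1, Finset.ne_of_mem_erase hwspec.1⟩,
          fun h => absurd h hfne, ?_⟩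
        intro μ' hbij hder hdom hag
        have hc : μ' cur ∈ A := hμ'A μ' hbij.1 hag cur hcur
        have hc' : μ' cur ∈ A.erase cur := Finset.mem_erase.2 ⟨hder cur, hc⟩
        rcases hdom with h | h
        · exact h
        · by_contra hne
          have hwx := hwspec.2 (μ' cur) hc' hne
          haveI := hpref cur
          exact absurd (trans_of (pref cur) h hwx) (irrefl_of (pref cur) _)
    obtain ⟨⟨hwA, hwcur⟩, hlast', hforce⟩ := key
    -- invariants for the recursive call
    have hR'card : R'.card = fuel := by
      rw [hR', Finset.card_erase_of_mem hcur, hR]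
      omega
    have hA'card : A'.card = fuel := by
      rw [hA', Finset.card_erase_of_mem hwA, hA]
      omega
    have hcur'0 : 0 < fuel → cur' ∈ R' := by
      intro hf
      have hne : R'.Nonempty := Finset.card_pos.mp (hR'card ▸ hf)
      rw [hcur']
      split_ifs with h
      · exact h
      · exact (pick_spec dprio R' (hd R' hne)).1
    have h3' : ∀ j ∈ R', j ≠ cur' → j ∈ A' := by
      intro j hj hjc
      have hjR : j ∈ R := Finset.mem_of_mem_erase hj
      have hjcur : j ≠ cur := Finset.ne_of_mem_erase hj
      have hjA : j ∈ A := h3 j hjR hjcur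
      have hjw : j ≠ w := by
        intro hjweq
        have hwR' : w ∈ R' := hjweq ▸ hj
        have : cur' = j := by rw [hcur', if_pos hwR']; exact hjweq.symm
        exact hjc this.symm
      exact Finset.mem_erase.2 ⟨hjw, hjA⟩
    have h4' : ∀ j, j ∉ R' → μ₁ j ∉ A' ∧ μ₁ j ≠ j := by
      intro j hj
      by_cases hjc : j = cur
      · subst hjc
        rw [hμ₁, Function.update_self]
        exact ⟨Finset.notMem_erase w A, hwcur⟩
      · have hjR : j ∉ R := by
          intro h; exact hj (Finset.mem_erase.2 ⟨hjc, h⟩)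
        rw [hμ₁, Function.update_of_ne hjc]
        exact ⟨fun h => (h4 j hjR).1 (Finset.mem_of_mem_erase h), (h4 j hjR).2⟩
    have h5' : ∀ j k, j ∉ R' → k ∉ R' → μ₁ j = μ₁ k → j = k := by
      intro j k hj hk heq
      by_cases hjc : j = cur <;> by_cases hkc : k = cur
      · rw [hjc, hkc]
      · subst hjc
        have hkR : k ∉ R := fun h => hk (Finset.mem_erase.2 ⟨hkc, h⟩)
        rw [hμ₁, Function.update_self, Function.update_of_ne hkc] at heq
        exact absurd (heq ▸ hwA) ((h4 k hkR).1)
      · subst hkc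
        have hjR : j ∉ R := fun h => hj (Finset.mem_erase.2 ⟨hjc, h⟩)
        rw [hμ₁, Function.update_self, Function.update_of_ne hjc] at heq
        exact absurd (heq ▸ hwA) ((h4 j hjR).1)
      · have hjR : j ∉ R := fun h => hj (Finset.mem_erase.2 ⟨hjc, h⟩)
        have hkR : k ∉ R := fun h => hk (Finset.mem_erase.2 ⟨hkc, h⟩)
        rw [hμ₁, Function.update_of_ne hjc, Function.update_of_ne hkc] at heq
        exact h5 j k hjR hkR heq
    have h6' : ∀ a, a ∉ A' → ∃ j, j ∉ R' ∧ μ₁ j = a := by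
      intro a ha
      by_cases haw : a = w
      · refine ⟨cur, Finset.notMem_erase cur R, ?_⟩
        rw [hμ₁, Function.update_self, haw]
      · have haA : a ∉ A := by
          intro h; exact ha (Finset.mem_erase.2 ⟨haw, h⟩)
        obtain ⟨j, hjR, hj⟩ := h6 a haA
        have hjc : j ≠ cur := fun h => hjR (h ▸ hcur)
        refine ⟨j, fun h => hjR (Finset.mem_of_mem_erase h), ?_⟩
        rw [hμ₁, Function.update_of_ne hjc, hj]
    obtain ⟨c1, c2, c3, c4⟩ := ih cur' R' A' μ₁ hR'card hA'card hcur'0 h3' hlast' h4' h5' h6'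
    refine ⟨c1, c2, ?_, ?_⟩
    · intro j hj
      have hjc : j ≠ cur := fun h => hj (h ▸ hcur)
      have hj' : j ∉ R' := fun h => hj (Finset.mem_of_mem_erase h)
      rw [c3 j hj', hμ₁, Function.update_of_ne hjc]
    · intro μ' hb hder hdom hag
      have hcurR' : cur ∉ R' := Finset.notMem_erase cur R
      have hcurval : npbStep pref dprio vote fuel cur' R' A' μ₁ cur = w := by
        rw [c3 cur hcurR', hμ₁, Function.update_self]
      have hmc : μ' cur = w :=
        hforce μ' hb hder (by have := hdom cur; rwa [hcurval] at this) hag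
      have hag' : ∀ j, j ∉ R' → μ' j = μ₁ j := by
        intro j hj
        by_cases hjc : j = cur
        · subst hjc; rw [hμ₁, Function.update_self]; exact hmc
        · rw [hμ₁, Function.update_of_ne hjc]
          exact hag j (fun h => hj (Finset.mem_erase.2 ⟨hjc, h⟩))
      exact c4 μ' hb hder hdom hag'

/-- For every `n ≥ 3` (here `n = m + 3`) and every strict preference profile, the
assignment produced by the NPB Active Player Draft mechanism is a derangement that
is CE-efficient at the profile. -/
theorem npb_ce_efficient (m : ℕ)
    (pref : Fin (m + 3) → Fin (m + 3) → Fin (m + 3) → Prop)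
    (hpref : StrictProfile pref) :
    Function.Bijective (npb pref) ∧ (∀ i, npb pref i ≠ i) ∧
    CEEfficientAt pref (npb pref) := by
  classical
  set vote : Fin (m + 3) → Fin (m + 3) :=
    fun i => pick (pref i) (Finset.univ.erase i) with hvdef
  set votes : Fin (m + 3) → ℕ :=
    fun c => (Finset.univ.filter fun i => vote i = c).card with hvsdef
  set dprio : Fin (m + 3) → Fin (m + 3) → Prop :=
    fun i j => votes j < votes i ∨ (votes i = votes j ∧ i < j) with hddef
  have hnpb : npb pref = npbStep pref dprio vote (m + 3) (pick dprio Finset.univ)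
      Finset.univ Finset.univ (fun a => a) := rfl
  have hvote : ∀ i, vote i ≠ i ∧ ∀ x, x ≠ i → x ≠ vote i → pref i (vote i) x := by
    intro i
    have hne : (Finset.univ.erase i).Nonempty := by
      obtain ⟨x, hx⟩ := exists_ne i
      exact ⟨x, Finset.mem_erase.2 ⟨hx, Finset.mem_univ x⟩⟩
    obtain ⟨h1, h2⟩ := pick_spec (pref i) _ (exists_sto_max _ (hpref i) _ hne)
    rw [hvdef]
    exact ⟨Finset.ne_of_mem_erase h1,
      fun x hxi hxp => h2 x (Finset.mem_erase.2 ⟨hxi, Finset.mem_univ x⟩) hxp⟩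
  have hdsto : IsStrictTotalOrder (Fin (m + 3)) dprio := by
    refine { trichotomous := ?_, irrefl := ?_, trans := ?_ }
    · intro a b hab hba
      rcases Nat.lt_trichotomy (votes a) (votes b) with h | h | h
      · exact absurd (Or.inl h) hba
      · rcases lt_trichotomy a b with h' | h' | h'
        · exact absurd (Or.inr ⟨h, h'⟩) hab
        · exact h'
        · exact absurd (Or.inr ⟨h.symm, h'⟩) hba
      · exact absurd (Or.inl h) hab
    · intro a h
      rcases h with h | ⟨_, h2⟩
      · exact absurd h (lt_irrefl _)
      · exact absurd h2 (lt_irrefl a)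
    · intro a b c hab hbc
      rcases hab with h1 | ⟨h1, h1'⟩ <;> rcases hbc with h2 | ⟨h2, h2'⟩
      · exact Or.inl (lt_trans h2 h1)
      · exact Or.inl (h2 ▸ h1)
      · exact Or.inl (h1 ▸ h2)
      · exact Or.inr ⟨h1.trans h2, lt_trans h1' h2'⟩
  have hd : ∀ s : Finset (Fin (m + 3)), s.Nonempty →
      ∃ x ∈ s, ∀ y ∈ s, y ≠ x → dprio x y :=
    fun s hs => exists_sto_max dprio hdsto s hs
  obtain ⟨c1, c2, c3, c4⟩ := npb_key pref hpref dprio hd vote hvote (m + 3)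
    (pick dprio Finset.univ) Finset.univ Finset.univ (fun a => a)
    (by simp) (by simp) (fun _ => Finset.mem_univ _)
    (fun j _ _ => Finset.mem_univ _)
    (fun h => absurd h (by omega))
    (fun j hj => absurd (Finset.mem_univ j) hj)
    (fun j k hj _ _ => absurd (Finset.mem_univ j) hj)
    (fun a ha => absurd (Finset.mem_univ a) ha)
  rw [hnpb]
  refine ⟨c1, c2, ?_⟩
  rintro ⟨μ', hb, hder, hdom, j, hjstrict⟩
  have heq := c4 μ' hb hder hdom (fun j hj => absurd (Finset.mem_univ j) hj)
  rw [heq] at hjstrict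
  haveI := hpref j
  exact absurd hjstrict (irrefl_of (pref j) _)
end

section
/- For every n ≥ 3, the NPB Active Player Draft mechanism fails respecting improvement: there exist preference profiles ≻ and ≻' and a club i such that ≻ is an improvement for club i with respect to ≻' and f_i(≻') ≻_i f_i(≻), where f denotes the mechanism's assignment. -/
open scoped Classical

/-! ### Auxiliary machinery for the counterexample -/

section AuxNPB
open Finset

set_option maxHeartbeats 2000000

lemma pick_eq {α : Type*} [Nonempty α] {r : α → α → Prop} {s : Finset α} {a : α}
    (ha : a ∈ s) (h : ∀ x ∈ s, x ≠ a → r a x)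
    (asym : ∀ x, r a x → r x a → False) : pick r s = a := by
  have hs : pick r s ∈ s ∧ ∀ x ∈ s, x ≠ pick r s → r (pick r s) x :=
    Classical.epsilon_spec (⟨a, ha, h⟩ : ∃ z, z ∈ s ∧ ∀ x ∈ s, x ≠ z → r z x)
  by_contra hne
  exact asym _ (h _ hs.1 hne) (hs.2 a ha fun e => hne e.symm)

lemma theElem_eq {α : Type*} [Nonempty α] {s : Finset α} {a : α} (h : s = {a}) :
    theElem s = a := by
  subst h
  have hs : theElem ({a} : Finset α) ∈ ({a} : Finset α) :=
    Classical.epsilon_spec (⟨a, by simp⟩ : ∃ z, z ∈ ({a} : Finset α))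
  simpa using hs

/-! #### Step-evaluation lemmas for `npbStep` -/

section Steps
variable {n : ℕ} [NeZero n] (pref : Fin n → Fin n → Fin n → Prop)
  (d : Fin n → Fin n → Prop) (v : Fin n → Fin n)

lemma fuel_congr {f g : ℕ} (h : f = g) (cur : Fin n) (R A : Finset (Fin n))
    (μ : Fin n → Fin n) :
    npbStep pref d v f cur R A μ = npbStep pref d v g cur R A μ := by rw [h]

lemma step_vote {fuel : ℕ} (hf : fuel ≠ 0) {cur : Fin n} {R A : Finset (Fin n)}
    (μ : Fin n → Fin n) (hcard : R.card ≠ 2) (hv : v cur ∈ A)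
    (hin : v cur ∈ R.erase cur) :
    npbStep pref d v fuel cur R A μ =
      npbStep pref d v (fuel - 1) (v cur) (R.erase cur) (A.erase (v cur))
        (Function.update μ cur (v cur)) := by
  obtain ⟨k, rfl⟩ := Nat.exists_eq_succ_of_ne_zero hf
  rw [npbStep]
  simp only [if_neg hcard, if_pos hv, if_pos hin, Nat.succ_sub_one]

lemma step_pick {fuel : ℕ} (hf : fuel ≠ 0) {cur : Fin n} {R A : Finset (Fin n)}
    (μ : Fin n → Fin n) (hcard : R.card ≠ 2) (hv : v cur ∉ A) {w : Fin n}
    (hw : pick (pref cur) (A.erase cur) = w) (hin : w ∈ R.erase cur) :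
    npbStep pref d v fuel cur R A μ =
      npbStep pref d v (fuel - 1) w (R.erase cur) (A.erase w)
        (Function.update μ cur w) := by
  obtain ⟨k, rfl⟩ := Nat.exists_eq_succ_of_ne_zero hf
  rw [npbStep]
  simp only [if_neg hcard, if_neg hv, hw, if_pos hin, Nat.succ_sub_one]

lemma step_last2 {fuel : ℕ} (hf : fuel ≠ 0) {cur : Fin n} {R A : Finset (Fin n)}
    (μ : Fin n → Fin n) (hcard : R.card = 2) {w : Fin n}
    (hw : theElem (R.erase cur) = w) (hin : w ∈ R.erase cur) :
    npbStep pref d v fuel cur R A μ =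
      npbStep pref d v (fuel - 1) w (R.erase cur) (A.erase w)
        (Function.update μ cur w) := by
  obtain ⟨k, rfl⟩ := Nat.exists_eq_succ_of_ne_zero hf
  rw [npbStep]
  simp only [if_pos hcard, hw, if_pos hin, Nat.succ_sub_one]

lemma step_one {cur : Fin n} {R A : Finset (Fin n)} (μ : Fin n → Fin n)
    (hcard : R.card ≠ 2) (hv : v cur ∈ A) :
    npbStep pref d v 1 cur R A μ = Function.update μ cur (v cur) := by
  rw [npbStep]
  simp only [if_neg hcard, if_pos hv]
  rw [npbStep]

end Steps

/-! #### The preference profiles -/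

def rkM (n : ℕ) (imp : Bool) (i p : ℕ) : ℕ :=
  if i = 0 then (if p = 1 then 0 else if p = 2 then 1 else if p = 3 then 2
      else if p = 0 then 3 else p)
  else if i = 1 then
    (if n = 3 ∧ imp = true then (if p = 0 then 0 else if p = 2 then 1 else 2)
     else (if 4 ≤ p then p else if p = 3 then n else if p = 2 then n + 1
       else if p = 0 then n + 2 else n + 3))
  else if i = 2 then (if p = 1 then 0 else if p = 0 then 1 else p)
  else if i = 3 then
    (if imp = true then (if p = 0 then 0 else if p = 2 then 1 else if p = 1 then 2 else p)
     else (if p = 2 then 0 else if p = 1 then 1 else if p = 0 then 2 else p))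
  else (if p = i then n + 4 else if 4 ≤ p then (if p = i + 1 then 0 else p)
    else if p = 3 then n else if p = 0 then n + 1 else if p = 1 then n + 2 else n + 3)

def prefM (n : ℕ) [NeZero n] (imp : Bool) : Fin n → Fin n → Fin n → Prop :=
  fun i a b => rkM n imp (i : ℕ) (a : ℕ) < rkM n imp (i : ℕ) (b : ℕ)

lemma rkM_inj (n : ℕ) (imp : Bool) (i a b : ℕ) (ha : a < n) (hb : b < n)
    (h : rkM n imp i a = rkM n imp i b) : a = b := by
  by_cases h0 : i = 0
  · simp only [rkM, h0, if_pos rfl] at h; split_ifs at h <;> omega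
  by_cases h1 : i = 1
  · subst h1; simp only [rkM] at h; norm_num at h; split_ifs at h <;> omega
  by_cases h2 : i = 2
  · subst h2; simp only [rkM] at h; norm_num at h; split_ifs at h <;> omega
  by_cases h3 : i = 3
  · subst h3; simp only [rkM] at h; norm_num at h; split_ifs at h <;> omega
  · simp only [rkM, if_neg h0, if_neg h1, if_neg h2, if_neg h3] at h
    split_ifs at h <;> omega

lemma strict_prefM (n : ℕ) [NeZero n] (imp : Bool) : StrictProfile (prefM n imp) := by
  intro i
  letI : IsTrichotomous (Fin n) (prefM n imp i) := ⟨by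
    intro a b hab hba
    rcases Nat.lt_trichotomy (rkM n imp i a) (rkM n imp i b) with h | h | h
    · exact absurd h hab
    · exact Fin.ext (rkM_inj n imp i a b a.isLt b.isLt h)
    · exact absurd h hba⟩
  letI : IsIrrefl (Fin n) (prefM n imp i) := ⟨fun a => Nat.lt_irrefl _⟩
  letI : IsTrans (Fin n) (prefM n imp i) := ⟨fun _ _ _ => Nat.lt_trans⟩
  letI : IsStrictOrder (Fin n) (prefM n imp i) := ⟨⟩
  exact ⟨⟩

lemma improvement_prefM (n : ℕ) [NeZero n] (hn : 3 ≤ n) :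
    Improvement (prefM n false) (prefM n true) (⟨0, by omega⟩ : Fin n) := by
  have key : ∀ j k l : ℕ, k < n → l < n → k ≠ 0 → l ≠ 0 →
      (rkM n false j k < rkM n false j l ↔ rkM n true j k < rkM n true j l) := by
    intro j k l hk hl hk0 hl0
    by_cases h0 : j = 0
    · subst h0; simp only [rkM]; norm_num
    by_cases h3 : j = 3
    · subst h3; simp only [rkM]; norm_num; split_ifs <;> omega
    by_cases h1 : j = 1
    · subst h1
      by_cases hn3 : n = 3
      · subst hn3; simp only [rkM]; norm_num; split_ifs <;> omega
      · simp only [rkM]; norm_num [hn3]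
    by_cases h2 : j = 2
    · subst h2; simp only [rkM]; norm_num
    · simp only [rkM, if_neg h0, if_neg h1, if_neg h2, if_neg h3]
  have key2 : ∀ j k : ℕ, j ≠ 0 → k < n → k ≠ 0 →
      (rkM n false j 0 < rkM n false j k → rkM n true j 0 < rkM n true j k) := by
    intro j k hj0 hk hk0 h
    by_cases h3 : j = 3
    · subst h3; simp only [rkM] at h ⊢; norm_num at h ⊢; split_ifs at h ⊢ <;> omega
    by_cases h1 : j = 1
    · subst h1
      by_cases hn3 : n = 3
      · subst hn3; simp only [rkM] at h ⊢; norm_num at h ⊢; split_ifs at h ⊢ <;> omega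
      · simp only [rkM] at h ⊢; norm_num [hn3] at h ⊢; exact h
    by_cases h2 : j = 2
    · subst h2; simp only [rkM] at h ⊢; norm_num at h ⊢; exact h
    · simp only [rkM, if_neg hj0, if_neg h1, if_neg h2, if_neg h3] at h ⊢; exact h
  refine ⟨rfl, ?_, ?_⟩
  · intro j hj k hk h
    have hjv : (j : ℕ) ≠ 0 := fun e => hj (Fin.ext e)
    have hkv : (k : ℕ) ≠ 0 := fun e => hk (Fin.ext e)
    exact key2 (j : ℕ) (k : ℕ) hjv k.isLt hkv h
  · intro j hj k hk l hl
    have hkv : (k : ℕ) ≠ 0 := fun e => hk (Fin.ext e)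
    have hlv : (l : ℕ) ≠ 0 := fun e => hl (Fin.ext e)
    exact key (j : ℕ) (k : ℕ) (l : ℕ) k.isLt l.isLt hkv hlv

/-! #### The vote function -/

def VN (n : ℕ) (imp : Bool) (k : ℕ) : ℕ :=
  if k = 0 then 1
  else if k = 1 then (if n = 3 then (if imp = true then 0 else 2) else if n = 4 then 3 else 4)
  else if k = 2 then 1
  else if k = 3 then (if imp = true then 0 else 2)
  else if k = n - 1 then (if n = 5 then 3 else 4)
  else k + 1

lemma VN_lt (n : ℕ) (imp : Bool) (hn : 3 ≤ n) (k : ℕ) (hk : k < n) : VN n imp k < n := by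
  unfold VN; split_ifs <;> omega

lemma VN_ne (n : ℕ) (imp : Bool) (hn : 3 ≤ n) (k : ℕ) (hk : k < n) : VN n imp k ≠ k := by
  unfold VN; split_ifs <;> omega

lemma rk_vote_min (n : ℕ) (imp : Bool) (hn : 3 ≤ n) (i x : ℕ) (hi : i < n) (hx : x < n)
    (hxi : x ≠ i) (hxv : x ≠ VN n imp i) :
    rkM n imp i (VN n imp i) < rkM n imp i x := by
  by_cases hi0 : i = 0
  · subst hi0
    simp only [VN] at hxv ⊢; norm_num at hxv ⊢
    simp only [rkM]; norm_num
    split_ifs <;> omega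
  by_cases hi1 : i = 1
  · subst hi1
    by_cases hn3 : n = 3
    · subst hn3
      cases imp <;>
      · simp only [VN] at hxv ⊢; norm_num at hxv ⊢
        simp only [rkM]; norm_num
        split_ifs <;> omega
    by_cases hn4 : n = 4
    · subst hn4
      simp only [VN] at hxv ⊢; norm_num at hxv ⊢
      simp only [rkM]; norm_num
      split_ifs <;> omega
    · simp only [VN, if_neg hn3, if_neg hn4] at hxv ⊢; norm_num at hxv ⊢
      simp only [rkM]; norm_num [hn3]
      split_ifs <;> omega
  by_cases hi2 : i = 2
  · subst hi2
    simp only [VN] at hxv ⊢; norm_num at hxv ⊢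
    simp only [rkM]; norm_num
    split_ifs <;> omega
  by_cases hi3 : i = 3
  · subst hi3
    cases imp <;>
    · simp only [VN] at hxv ⊢; norm_num at hxv ⊢
      simp only [rkM]; norm_num
      split_ifs <;> omega
  by_cases hlast : i = n - 1
  · by_cases hn5 : n = 5
    · subst hn5
      have hi4 : i = 4 := by omega
      subst hi4
      simp only [VN] at hxv ⊢; norm_num at hxv ⊢
      simp only [rkM]; norm_num
      split_ifs <;> omega
    · simp only [VN, if_neg hi0, if_neg hi1, if_neg hi2, if_neg hi3, if_pos hlast,
        if_neg hn5] at hxv ⊢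
      simp only [rkM, if_neg hi0, if_neg hi1, if_neg hi2, if_neg hi3]
      split_ifs <;> omega
  · simp only [VN, if_neg hi0, if_neg hi1, if_neg hi2, if_neg hi3, if_neg hlast] at hxv ⊢
    simp only [rkM, if_neg hi0, if_neg hi1, if_neg hi2, if_neg hi3]
    split_ifs <;> omega

def VM (n : ℕ) [NeZero n] (imp : Bool) : Fin n → Fin n :=
  fun i => ⟨VN n imp (i : ℕ) % n, Nat.mod_lt _ (Nat.pos_of_ne_zero (NeZero.ne n))⟩

lemma VM_val (n : ℕ) [NeZero n] (imp : Bool) (hn : 3 ≤ n) (i : Fin n) :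
    ((VM n imp i : Fin n) : ℕ) = VN n imp (i : ℕ) :=
  Nat.mod_eq_of_lt (VN_lt n imp hn (i : ℕ) i.isLt)

lemma VM_mk (n : ℕ) [NeZero n] (imp : Bool) (hn : 3 ≤ n) (k v : ℕ) (hk : k < n)
    (hv : v < n) (h : VN n imp k = v) : VM n imp ⟨k, hk⟩ = ⟨v, hv⟩ :=
  Fin.ext (by rw [VM_val n imp hn ⟨k, hk⟩]; exact h)

lemma vote_eq (n : ℕ) [NeZero n] (imp : Bool) (hn : 3 ≤ n) (i : Fin n) :
    pick (prefM n imp i) (Finset.univ.erase i) = VM n imp i := by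
  apply pick_eq
  · refine Finset.mem_erase.2 ⟨?_, Finset.mem_univ _⟩
    simp only [ne_eq, Fin.ext_iff, VM_val n imp hn i]
    exact VN_ne n imp hn (i : ℕ) i.isLt
  · intro x hx hxne
    have hxi : (x : ℕ) ≠ (i : ℕ) := by
      have := (Finset.mem_erase.1 hx).1
      simpa [Fin.ext_iff] using this
    have hxv : (x : ℕ) ≠ VN n imp (i : ℕ) := by
      rw [← VM_val n imp hn i]
      exact fun e => hxne (Fin.ext e)
    have h := rk_vote_min n imp hn (i : ℕ) (x : ℕ) i.isLt x.isLt hxi hxv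
    simp only [prefM, VM_val n imp hn i]
    exact h
  · intro x h1 h2
    simp only [prefM] at h1 h2
    omega

/-! #### Vote counts and first mover -/

lemma VN_one (n : ℕ) (imp : Bool) (hn : 3 ≤ n) (k : ℕ) (hk : k < n) :
    VN n imp k = 1 ↔ k = 0 ∨ k = 2 := by
  unfold VN; split_ifs <;> first | omega | (rw [false_iff]; omega)

lemma VN_34 (n : ℕ) (imp : Bool) (hn : 3 ≤ n) (k v : ℕ) (hk : k < n)
    (h : VN n imp k = v) (hv : v = 3 ∨ v = 4) : k = 1 ∨ k = n - 1 := by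
  unfold VN at h; split_ifs at h <;> omega

lemma VN_inj' (n : ℕ) (imp : Bool) (hn : 3 ≤ n) (a b : ℕ) (ha : a < n) (hb : b < n)
    (h : VN n imp a = VN n imp b) (h1 : VN n imp a ≠ 1) (h3 : VN n imp a ≠ 3)
    (h4 : VN n imp a ≠ 4) : a = b := by
  unfold VN at h h1 h3 h4; split_ifs at h h1 h3 h4 <;> omega

lemma cnt_one (n : ℕ) [NeZero n] (imp : Bool) (hn : 3 ≤ n) :
    (Finset.univ.filter fun k : Fin n => VM n imp k = ⟨1, by omega⟩).card = 2 := by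
  have hset : (Finset.univ.filter fun k : Fin n => VM n imp k = ⟨1, by omega⟩)
      = {⟨0, by omega⟩, ⟨2, by omega⟩} := by
    ext k
    simp only [Finset.mem_filter, Finset.mem_univ, true_and, Finset.mem_insert,
      Finset.mem_singleton, Fin.ext_iff, VM_val n imp hn k]
    exact VN_one n imp hn (k : ℕ) k.isLt
  rw [hset, Finset.card_insert_of_notMem (by simp [Fin.ext_iff]), Finset.card_singleton]

lemma pick_dprio (n : ℕ) [NeZero n] (imp : Bool) (hn : 3 ≤ n)
    (cnt : Fin n → ℕ)
    (hcnt : ∀ c, cnt c = (Finset.univ.filter fun k : Fin n => VM n imp k = c).card) :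
    pick (fun i j : Fin n => cnt j < cnt i ∨ (cnt i = cnt j ∧ i < j)) Finset.univ
      = ⟨1, by omega⟩ := by
  have h1 : cnt ⟨1, by omega⟩ = 2 := by rw [hcnt]; exact cnt_one n imp hn
  have hbnd : ∀ x : Fin n, (x : ℕ) ≠ 1 →
      cnt x < 2 ∨ (cnt x = 2 ∧ (1 : ℕ) < (x : ℕ)) := by
    intro x hx
    by_cases h34 : (x : ℕ) = 3 ∨ (x : ℕ) = 4
    · have hsub : (Finset.univ.filter fun k : Fin n => VM n imp k = x)
          ⊆ {⟨1, by omega⟩, ⟨n - 1, by omega⟩} := by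
        intro k hk
        have hkx : VN n imp (k : ℕ) = (x : ℕ) := by
          have := (Finset.mem_filter.1 hk).2
          rw [← VM_val n imp hn k]
          exact congrArg Fin.val this
        have := VN_34 n imp hn (k : ℕ) (x : ℕ) k.isLt hkx h34
        simp only [Finset.mem_insert, Finset.mem_singleton, Fin.ext_iff]
        rcases this with h | h
        · exact Or.inl h
        · exact Or.inr h
      have hle : cnt x ≤ 2 := by
        rw [hcnt]
        calc (Finset.univ.filter fun k : Fin n => VM n imp k = x).card
            ≤ ({⟨1, by omega⟩, ⟨n - 1, by omega⟩} : Finset (Fin n)).card :=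
              Finset.card_le_card hsub
          _ ≤ 2 := by
              apply le_trans (Finset.card_insert_le _ _)
              simp
      rcases lt_or_eq_of_le hle with h | h
      · exact Or.inl h
      · exact Or.inr ⟨h, by rcases h34 with h' | h' <;> omega⟩
    · left
      have hle : cnt x ≤ 1 := by
        rw [hcnt]
        apply Finset.card_le_one.2
        intro a ha b hb
        have hax : VN n imp (a : ℕ) = (x : ℕ) := by
          rw [← VM_val n imp hn a]
          exact congrArg Fin.val (Finset.mem_filter.1 ha).2
        have hbx : VN n imp (b : ℕ) = (x : ℕ) := by
          rw [← VM_val n imp hn b]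
          exact congrArg Fin.val (Finset.mem_filter.1 hb).2
        refine Fin.ext (VN_inj' n imp hn (a : ℕ) (b : ℕ) a.isLt b.isLt
          (hax.trans hbx.symm) ?_ ?_ ?_) <;> (rw [hax]; omega)
      omega
  apply pick_eq (Finset.mem_univ _)
  · intro x _ hxne
    have hx : (x : ℕ) ≠ 1 := fun e => hxne (Fin.ext e)
    rcases hbnd x hx with h | ⟨he, hlt⟩
    · exact Or.inl (by omega)
    · exact Or.inr ⟨by omega, by rw [Fin.lt_def]; exact hlt⟩
  · intro x h1' h2'
    rcases h1' with h | ⟨he, hlt⟩ <;> rcases h2' with h' | ⟨he', hlt'⟩ <;>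
      first
        | omega
        | (rw [Fin.lt_def] at hlt hlt' <;> omega)
        | (rw [Fin.lt_def] at hlt; omega)
        | (rw [Fin.lt_def] at hlt'; omega)

lemma fin_mk_ne {n : ℕ} {a b : ℕ} (ha : a < n) (hb : b < n) (h : a ≠ b) :
    (⟨a, ha⟩ : Fin n) ≠ ⟨b, hb⟩ := fun e => h (congrArg Fin.val e)

lemma fin_val_mk {n : ℕ} (a : ℕ) (h : a < n) : ((⟨a, h⟩ : Fin n) : ℕ) = a := rfl

/-! #### Running the draft -/

section Runs
variable (n : ℕ) [NeZero n]

lemma run2_base (hn : 3 ≤ n) (d : Fin n → Fin n → Prop) (μ : Fin n → Fin n) :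
    npbStep (prefM n false) d (VM n false) 2 ⟨2, by omega⟩
      {⟨0, by omega⟩, ⟨2, by omega⟩} {⟨0, by omega⟩, ⟨1, by omega⟩} μ ⟨0, by omega⟩
      = ⟨1, by omega⟩ := by
  have hv0 : VM n false ⟨0, by omega⟩ = ⟨1, by omega⟩ :=
    VM_mk n false hn 0 1 (by omega) (by omega) (by norm_num [VN])
  have hcard : ({⟨0, by omega⟩, ⟨2, by omega⟩} : Finset (Fin n)).card = 2 := by
    rw [Finset.card_insert_of_notMem (by simp), Finset.card_singleton]
  have her : ({⟨0, by omega⟩, ⟨2, by omega⟩} : Finset (Fin n)).erase ⟨2, by omega⟩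
      = {⟨0, by omega⟩} := by
    ext c; have hc := c.isLt
    simp only [Finset.mem_erase, ne_eq, Fin.ext_iff, fin_val_mk, Finset.mem_insert,
      Finset.mem_singleton]
    omega
  rw [step_last2 _ d _ (by norm_num) μ hcard (theElem_eq her)
    (by rw [her]; exact Finset.mem_singleton_self _)]
  rw [her]
  have hea : ({⟨0, by omega⟩, ⟨1, by omega⟩} : Finset (Fin n)).erase ⟨0, by omega⟩
      = {⟨1, by omega⟩} := by
    ext c; have hc := c.isLt
    simp only [Finset.mem_erase, ne_eq, Fin.ext_iff, fin_val_mk, Finset.mem_insert,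
      Finset.mem_singleton]
    omega
  rw [hea, fuel_congr _ d _ (show (2 : ℕ) - 1 = 1 by norm_num)]
  rw [step_one _ d _ _ (by simp) (by rw [hv0]; exact Finset.mem_singleton_self _)]
  rw [hv0, Function.update_self]

lemma run2_imp (hn : 3 ≤ n) (d : Fin n → Fin n → Prop) (μ : Fin n → Fin n) :
    npbStep (prefM n true) d (VM n true) 2 ⟨0, by omega⟩
      {⟨0, by omega⟩, ⟨2, by omega⟩} {⟨1, by omega⟩, ⟨2, by omega⟩} μ ⟨0, by omega⟩
      = ⟨2, by omega⟩ := by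
  have hv2 : VM n true ⟨2, by omega⟩ = ⟨1, by omega⟩ :=
    VM_mk n true hn 2 1 (by omega) (by omega) (by norm_num [VN])
  have hcard : ({⟨0, by omega⟩, ⟨2, by omega⟩} : Finset (Fin n)).card = 2 := by
    rw [Finset.card_insert_of_notMem (by simp), Finset.card_singleton]
  have her : ({⟨0, by omega⟩, ⟨2, by omega⟩} : Finset (Fin n)).erase ⟨0, by omega⟩
      = {⟨2, by omega⟩} := by
    ext c; have hc := c.isLt
    simp only [Finset.mem_erase, ne_eq, Fin.ext_iff, fin_val_mk, Finset.mem_insert,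
      Finset.mem_singleton]
    omega
  rw [step_last2 _ d _ (by norm_num) μ hcard (theElem_eq her)
    (by rw [her]; exact Finset.mem_singleton_self _)]
  rw [her]
  have hea : ({⟨1, by omega⟩, ⟨2, by omega⟩} : Finset (Fin n)).erase ⟨2, by omega⟩
      = {⟨1, by omega⟩} := by
    ext c; have hc := c.isLt
    simp only [Finset.mem_erase, ne_eq, Fin.ext_iff, fin_val_mk, Finset.mem_insert,
      Finset.mem_singleton]
    omega
  rw [hea, fuel_congr _ d _ (show (2 : ℕ) - 1 = 1 by norm_num)]
  rw [step_one _ d _ _ (by simp) (by rw [hv2]; exact Finset.mem_singleton_self _)]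
  rw [Function.update_of_ne (fin_mk_ne _ _ (by omega)), Function.update_self]

lemma triple_card (hn : 4 ≤ n) :
    ({⟨0, by omega⟩, ⟨2, by omega⟩, ⟨3, by omega⟩} : Finset (Fin n)).card = 3 := by
  rw [Finset.card_insert_of_notMem (by simp [Fin.ext_iff, fin_val_mk]),
    Finset.card_insert_of_notMem (by simp [Fin.ext_iff, fin_val_mk]),
    Finset.card_singleton]

lemma run3_base (hn : 4 ≤ n) (d : Fin n → Fin n → Prop) (μ : Fin n → Fin n) :
    npbStep (prefM n false) d (VM n false) 3 ⟨3, by omega⟩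
      {⟨0, by omega⟩, ⟨2, by omega⟩, ⟨3, by omega⟩}
      {⟨0, by omega⟩, ⟨1, by omega⟩, ⟨2, by omega⟩} μ ⟨0, by omega⟩
      = ⟨1, by omega⟩ := by
  have hn3 : 3 ≤ n := by omega
  have hv3 : VM n false ⟨3, by omega⟩ = ⟨2, by omega⟩ :=
    VM_mk n false hn3 3 2 (by omega) (by omega) (by norm_num [VN])
  have her : ({⟨0, by omega⟩, ⟨2, by omega⟩, ⟨3, by omega⟩} : Finset (Fin n)).erase
      ⟨3, by omega⟩ = {⟨0, by omega⟩, ⟨2, by omega⟩} := by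
    ext c; have hc := c.isLt
    simp only [Finset.mem_erase, ne_eq, Fin.ext_iff, fin_val_mk, Finset.mem_insert,
      Finset.mem_singleton]
    omega
  rw [step_vote _ d _ (by norm_num) μ (by rw [triple_card n hn]; omega)
    (by rw [hv3]; simp [fin_val_mk]) (by rw [hv3, her]; simp [fin_val_mk])]
  rw [hv3, her]
  have hea : ({⟨0, by omega⟩, ⟨1, by omega⟩, ⟨2, by omega⟩} : Finset (Fin n)).erase
      ⟨2, by omega⟩ = {⟨0, by omega⟩, ⟨1, by omega⟩} := by
    ext c; have hc := c.isLt
    simp only [Finset.mem_erase, ne_eq, Fin.ext_iff, fin_val_mk, Finset.mem_insert,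
      Finset.mem_singleton]
    omega
  rw [hea, fuel_congr _ d _ (show (3 : ℕ) - 1 = 2 by norm_num)]
  exact run2_base n hn3 d _

lemma run3_imp (hn : 4 ≤ n) (d : Fin n → Fin n → Prop) (μ : Fin n → Fin n) :
    npbStep (prefM n true) d (VM n true) 3 ⟨3, by omega⟩
      {⟨0, by omega⟩, ⟨2, by omega⟩, ⟨3, by omega⟩}
      {⟨0, by omega⟩, ⟨1, by omega⟩, ⟨2, by omega⟩} μ ⟨0, by omega⟩
      = ⟨2, by omega⟩ := by
  have hn3 : 3 ≤ n := by omega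
  have hv3 : VM n true ⟨3, by omega⟩ = ⟨0, by omega⟩ :=
    VM_mk n true hn3 3 0 (by omega) (by omega) (by norm_num [VN])
  have her : ({⟨0, by omega⟩, ⟨2, by omega⟩, ⟨3, by omega⟩} : Finset (Fin n)).erase
      ⟨3, by omega⟩ = {⟨0, by omega⟩, ⟨2, by omega⟩} := by
    ext c; have hc := c.isLt
    simp only [Finset.mem_erase, ne_eq, Fin.ext_iff, fin_val_mk, Finset.mem_insert,
      Finset.mem_singleton]
    omega
  rw [step_vote _ d _ (by norm_num) μ (by rw [triple_card n hn]; omega)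
    (by rw [hv3]; simp [fin_val_mk]) (by rw [hv3, her]; simp [fin_val_mk])]
  rw [hv3, her]
  have hea : ({⟨0, by omega⟩, ⟨1, by omega⟩, ⟨2, by omega⟩} : Finset (Fin n)).erase
      ⟨0, by omega⟩ = {⟨1, by omega⟩, ⟨2, by omega⟩} := by
    ext c; have hc := c.isLt
    simp only [Finset.mem_erase, ne_eq, Fin.ext_iff, fin_val_mk, Finset.mem_insert,
      Finset.mem_singleton]
    omega
  rw [hea, fuel_congr _ d _ (show (3 : ℕ) - 1 = 2 by norm_num)]
  exact run2_imp n hn3 d _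

end Runs

/-! #### The bystander chain -/

def RrS (n : ℕ) [NeZero n] (j : ℕ) : Finset (Fin n) :=
  Finset.univ.filter (fun c => (c : ℕ) = 0 ∨ (c : ℕ) = 2 ∨ (c : ℕ) = 3 ∨ j ≤ (c : ℕ))

def AaS (n : ℕ) [NeZero n] (j : ℕ) : Finset (Fin n) :=
  Finset.univ.filter (fun c => (c : ℕ) ≤ 3 ∨ j + 1 ≤ (c : ℕ))

section Chain
variable (n : ℕ) [NeZero n]

lemma RrS_card (hn : 4 ≤ n) (j : ℕ) : (RrS n j).card ≠ 2 := by
  have hsub : ({⟨0, by omega⟩, ⟨2, by omega⟩, ⟨3, by omega⟩} : Finset (Fin n))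
      ⊆ RrS n j := by
    intro c hc
    simp only [Finset.mem_insert, Finset.mem_singleton] at hc
    simp only [RrS, Finset.mem_filter, Finset.mem_univ, true_and]
    rcases hc with rfl | rfl | rfl
    · left; rfl
    · right; left; rfl
    · right; right; left; rfl
  have h3 := Finset.card_le_card hsub
  rw [triple_card n hn] at h3
  omega

lemma erase_Rr (hn : 4 ≤ n) (j : ℕ) (h4 : 4 ≤ j) (hj : j ≤ n - 1) :
    (RrS n j).erase ⟨j, by omega⟩ = RrS n (j + 1) := by
  ext c
  have hc := c.isLt
  simp only [Finset.mem_erase, RrS, Finset.mem_filter, Finset.mem_univ, true_and,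
    ne_eq, Fin.ext_iff, fin_val_mk]
  omega

lemma erase_Aa (hn : 4 ≤ n) (j : ℕ) (h4 : 4 ≤ j) (hj : j + 1 ≤ n - 1) :
    (AaS n j).erase ⟨j + 1, by omega⟩ = AaS n (j + 1) := by
  ext c
  have hc := c.isLt
  simp only [Finset.mem_erase, AaS, Finset.mem_filter, Finset.mem_univ, true_and,
    ne_eq, Fin.ext_iff, fin_val_mk]
  omega

lemma erase_Rr_top (hn : 5 ≤ n) :
    (RrS n (n - 1)).erase ⟨n - 1, by omega⟩
      = {⟨0, by omega⟩, ⟨2, by omega⟩, ⟨3, by omega⟩} := by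
  ext c
  have hc := c.isLt
  simp only [Finset.mem_erase, RrS, Finset.mem_filter, Finset.mem_univ, true_and,
    ne_eq, Fin.ext_iff, fin_val_mk, Finset.mem_insert, Finset.mem_singleton]
  omega

lemma erase_Aa_top (hn : 5 ≤ n) :
    (AaS n (n - 1)).erase ⟨3, by omega⟩
      = {⟨0, by omega⟩, ⟨1, by omega⟩, ⟨2, by omega⟩} := by
  ext c
  have hc := c.isLt
  simp only [Finset.mem_erase, AaS, Finset.mem_filter, Finset.mem_univ, true_and,
    ne_eq, Fin.ext_iff, fin_val_mk, Finset.mem_insert, Finset.mem_singleton]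
  omega

lemma chain_top (hn : 5 ≤ n) (imp : Bool) (d : Fin n → Fin n → Prop)
    (μ : Fin n → Fin n) :
    npbStep (prefM n imp) d (VM n imp) 4 ⟨n - 1, by omega⟩
      (RrS n (n - 1)) (AaS n (n - 1)) μ ⟨0, by omega⟩
      = ⟨if imp = true then 2 else 1, by split_ifs <;> omega⟩ := by
  have hn3 : 3 ≤ n := by omega
  have hn4 : 4 ≤ n := by omega
  by_cases hn5 : n = 5
  · subst hn5
    have hv : VM 5 imp ⟨5 - 1, by omega⟩ = ⟨3, by omega⟩ := by
      apply VM_mk 5 imp hn3 (5 - 1) 3 (by omega) (by omega)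
      norm_num [VN]
    rw [step_vote _ d _ (by norm_num) μ (RrS_card 5 hn4 _)
      (by rw [hv]
          simp only [AaS, Finset.mem_filter, Finset.mem_univ, true_and, fin_val_mk]
          left; norm_num)
      (by rw [hv, erase_Rr_top 5 hn]; simp [fin_val_mk])]
    rw [hv, erase_Rr_top 5 hn, erase_Aa_top 5 hn,
      fuel_congr _ d _ (show (4 : ℕ) - 1 = 3 by norm_num)]
    cases imp
    · exact run3_base 5 hn4 d _
    · exact run3_imp 5 hn4 d _
  · have hn6 : 6 ≤ n := by omega
    have hvn : VN n imp (n - 1) = 4 := by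
      have e0 : ¬(n - 1 = 0) := by omega
      have e1 : ¬(n - 1 = 1) := by omega
      have e2 : ¬(n - 1 = 2) := by omega
      have e3 : ¬(n - 1 = 3) := by omega
      have e5 : ¬(n = 5) := by omega
      unfold VN
      rw [if_neg e0, if_neg e1, if_neg e2, if_neg e3, if_pos rfl, if_neg e5]
    have hv : VM n imp ⟨n - 1, by omega⟩ = ⟨4, by omega⟩ :=
      VM_mk n imp hn3 (n - 1) 4 (by omega) (by omega) hvn
    have hnotmem : VM n imp ⟨n - 1, by omega⟩ ∉ AaS n (n - 1) := by
      rw [hv]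
      simp only [AaS, Finset.mem_filter, Finset.mem_univ, true_and, fin_val_mk]
      push_neg
      constructor <;> omega
    have hpick : pick (prefM n imp ⟨n - 1, by omega⟩)
        ((AaS n (n - 1)).erase ⟨n - 1, by omega⟩) = ⟨3, by omega⟩ := by
      apply pick_eq
      · simp only [Finset.mem_erase, AaS, Finset.mem_filter, Finset.mem_univ, true_and,
          ne_eq, Fin.ext_iff, fin_val_mk]
        constructor
        · omega
        · left; omega
      · intro x hx hxne
        simp only [Finset.mem_erase, AaS, Finset.mem_filter, Finset.mem_univ, true_and,
          ne_eq, Fin.ext_iff, fin_val_mk] at hx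
        have hx3 : (x : ℕ) ≠ 3 := fun e => hxne (Fin.ext e)
        have hxlt := x.isLt
        show rkM n imp (n - 1) 3 < rkM n imp (n - 1) (x : ℕ)
        have e0 : ¬(n - 1 = 0) := by omega
        have e1 : ¬(n - 1 = 1) := by omega
        have e2 : ¬(n - 1 = 2) := by omega
        have e3 : ¬(n - 1 = 3) := by omega
        simp only [rkM, if_neg e0, if_neg e1, if_neg e2, if_neg e3]
        split_ifs <;> omega
      · intro x h1 h2
        simp only [prefM] at h1 h2
        omega
    rw [step_pick _ d _ (by norm_num) μ (RrS_card n hn4 _) hnotmem hpick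
      (by rw [erase_Rr_top n hn]; simp [fin_val_mk])]
    rw [erase_Rr_top n hn, erase_Aa_top n hn,
      fuel_congr _ d _ (show (4 : ℕ) - 1 = 3 by norm_num)]
    cases imp
    · exact run3_base n hn4 d _
    · exact run3_imp n hn4 d _

lemma chain (hn : 5 ≤ n) (imp : Bool) (d : Fin n → Fin n → Prop) :
    ∀ t j, ∀ (_ : 4 ≤ j) (_ : j ≤ n - 1) (_ : n - 1 - j = t), ∀ μ : Fin n → Fin n,
      npbStep (prefM n imp) d (VM n imp) (n + 3 - j) ⟨j, by omega⟩
        (RrS n j) (AaS n j) μ ⟨0, by omega⟩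
        = ⟨if imp = true then 2 else 1, by split_ifs <;> omega⟩ := by
  have hn3 : 3 ≤ n := by omega
  have hn4 : 4 ≤ n := by omega
  intro t
  induction t with
  | zero =>
    intro j h4 hle ht μ
    have hj : j = n - 1 := by omega
    subst hj
    rw [fuel_congr _ d _ (show n + 3 - (n - 1) = 4 by omega)]
    exact chain_top n hn imp d μ
  | succ t ih =>
    intro j h4 hle ht μ
    have hj2 : j ≤ n - 2 := by omega
    have hvn : VN n imp j = j + 1 := by
      have e0 : ¬(j = 0) := by omega
      have e1 : ¬(j = 1) := by omega
      have e2 : ¬(j = 2) := by omega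
      have e3 : ¬(j = 3) := by omega
      have e4 : ¬(j = n - 1) := by omega
      unfold VN
      rw [if_neg e0, if_neg e1, if_neg e2, if_neg e3, if_neg e4]
    have hv : VM n imp ⟨j, by omega⟩ = ⟨j + 1, by omega⟩ :=
      VM_mk n imp hn3 j (j + 1) (by omega) (by omega) hvn
    rw [step_vote _ d _ (by omega) μ (RrS_card n hn4 _)
      (by rw [hv]
          simp only [AaS, Finset.mem_filter, Finset.mem_univ, true_and, fin_val_mk]
          right; omega)
      (by rw [hv, erase_Rr n hn4 j h4 hle]
          simp only [RrS, Finset.mem_filter, Finset.mem_univ, true_and, fin_val_mk]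
          right; right; right; omega)]
    rw [hv, erase_Rr n hn4 j h4 hle, erase_Aa n hn4 j h4 (by omega),
      fuel_congr _ d _ (show n + 3 - j - 1 = n + 3 - (j + 1) by omega)]
    exact ih (j + 1) (by omega) (by omega) (by omega) _

end Chain

/-! #### Full evaluation of the mechanism -/

lemma npb_eval (n : ℕ) [NeZero n] (hn : 3 ≤ n) (imp : Bool) :
    npb (prefM n imp) ⟨0, by omega⟩
      = ⟨if imp = true then 2 else 1, by split_ifs <;> omega⟩ := by
  simp only [npb, vote_eq n imp hn]
  rw [pick_dprio n imp hn
    (fun c => (Finset.univ.filter fun k : Fin n => VM n imp k = c).card) (fun c => rfl)]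
  have hcard : (Finset.univ : Finset (Fin n)).card ≠ 2 := by
    simp only [Finset.card_univ, Fintype.card_fin]; omega
  by_cases hn3 : n = 3
  · subst hn3
    cases imp
    · have hv : VM 3 false ⟨1, by omega⟩ = ⟨2, by omega⟩ :=
        VM_mk 3 false hn 1 2 (by omega) (by omega) (by norm_num [VN])
      rw [step_vote _ _ _ (by omega) _ hcard (by rw [hv]; exact Finset.mem_univ _)
        (by rw [hv]
            exact Finset.mem_erase.2 ⟨fin_mk_ne _ _ (by omega), Finset.mem_univ _⟩)]
      rw [hv]
      have her : (Finset.univ : Finset (Fin 3)).erase ⟨1, by omega⟩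
          = {⟨0, by omega⟩, ⟨2, by omega⟩} := by
        ext c; have hc := c.isLt
        simp only [Finset.mem_erase, Finset.mem_univ, and_true, ne_eq, Fin.ext_iff,
          fin_val_mk, Finset.mem_insert, Finset.mem_singleton]
        omega
      have hea : (Finset.univ : Finset (Fin 3)).erase ⟨2, by omega⟩
          = {⟨0, by omega⟩, ⟨1, by omega⟩} := by
        ext c; have hc := c.isLt
        simp only [Finset.mem_erase, Finset.mem_univ, and_true, ne_eq, Fin.ext_iff,
          fin_val_mk, Finset.mem_insert, Finset.mem_singleton]
        omega
      rw [her, hea, fuel_congr _ _ _ (show (3 : ℕ) - 1 = 2 by norm_num)]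
      exact run2_base 3 hn _ _
    · have hv : VM 3 true ⟨1, by omega⟩ = ⟨0, by omega⟩ :=
        VM_mk 3 true hn 1 0 (by omega) (by omega) (by norm_num [VN])
      rw [step_vote _ _ _ (by omega) _ hcard (by rw [hv]; exact Finset.mem_univ _)
        (by rw [hv]
            exact Finset.mem_erase.2 ⟨fin_mk_ne _ _ (by omega), Finset.mem_univ _⟩)]
      rw [hv]
      have her : (Finset.univ : Finset (Fin 3)).erase ⟨1, by omega⟩
          = {⟨0, by omega⟩, ⟨2, by omega⟩} := by
        ext c; have hc := c.isLt
        simp only [Finset.mem_erase, Finset.mem_univ, and_true, ne_eq, Fin.ext_iff,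
          fin_val_mk, Finset.mem_insert, Finset.mem_singleton]
        omega
      have hea : (Finset.univ : Finset (Fin 3)).erase ⟨0, by omega⟩
          = {⟨1, by omega⟩, ⟨2, by omega⟩} := by
        ext c; have hc := c.isLt
        simp only [Finset.mem_erase, Finset.mem_univ, and_true, ne_eq, Fin.ext_iff,
          fin_val_mk, Finset.mem_insert, Finset.mem_singleton]
        omega
      rw [her, hea, fuel_congr _ _ _ (show (3 : ℕ) - 1 = 2 by norm_num)]
      exact run2_imp 3 hn _ _
  by_cases hn4 : n = 4
  · subst hn4
    have hv : VM 4 imp ⟨1, by omega⟩ = ⟨3, by omega⟩ :=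
      VM_mk 4 imp hn 1 3 (by omega) (by omega) (by norm_num [VN])
    rw [step_vote _ _ _ (by omega) _ hcard (by rw [hv]; exact Finset.mem_univ _)
      (by rw [hv]
          exact Finset.mem_erase.2 ⟨fin_mk_ne _ _ (by omega), Finset.mem_univ _⟩)]
    rw [hv]
    have her : (Finset.univ : Finset (Fin 4)).erase ⟨1, by omega⟩
        = {⟨0, by omega⟩, ⟨2, by omega⟩, ⟨3, by omega⟩} := by
      ext c; have hc := c.isLt
      simp only [Finset.mem_erase, Finset.mem_univ, and_true, ne_eq, Fin.ext_iff,
        fin_val_mk, Finset.mem_insert, Finset.mem_singleton]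
      omega
    have hea : (Finset.univ : Finset (Fin 4)).erase ⟨3, by omega⟩
        = {⟨0, by omega⟩, ⟨1, by omega⟩, ⟨2, by omega⟩} := by
      ext c; have hc := c.isLt
      simp only [Finset.mem_erase, Finset.mem_univ, and_true, ne_eq, Fin.ext_iff,
        fin_val_mk, Finset.mem_insert, Finset.mem_singleton]
      omega
    rw [her, hea, fuel_congr _ _ _ (show (4 : ℕ) - 1 = 3 by norm_num)]
    cases imp
    · exact run3_base 4 (by omega) _ _
    · exact run3_imp 4 (by omega) _ _
  · have hn5 : 5 ≤ n := by omega
    have hvn : VN n imp 1 = 4 := by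
      have e0 : ¬((1 : ℕ) = 0) := by omega
      unfold VN
      rw [if_neg e0, if_pos rfl, if_neg hn3, if_neg hn4]
    have hv : VM n imp ⟨1, by omega⟩ = ⟨4, by omega⟩ :=
      VM_mk n imp hn 1 4 (by omega) (by omega) hvn
    rw [step_vote _ _ _ (by omega) _ hcard (by rw [hv]; exact Finset.mem_univ _)
      (by rw [hv]
          exact Finset.mem_erase.2 ⟨fin_mk_ne _ _ (by omega), Finset.mem_univ _⟩)]
    rw [hv]
    have her : (Finset.univ : Finset (Fin n)).erase ⟨1, by omega⟩ = RrS n 4 := by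
      ext c; have hc := c.isLt
      simp only [Finset.mem_erase, Finset.mem_univ, and_true, ne_eq, Fin.ext_iff,
        fin_val_mk, RrS, Finset.mem_filter, true_and]
      omega
    have hea : (Finset.univ : Finset (Fin n)).erase ⟨4, by omega⟩ = AaS n 4 := by
      ext c; have hc := c.isLt
      simp only [Finset.mem_erase, Finset.mem_univ, and_true, ne_eq, Fin.ext_iff,
        fin_val_mk, AaS, Finset.mem_filter, true_and]
      omega
    rw [her, hea, fuel_congr _ _ _ (show n - 1 = n + 3 - 4 by omega)]
    exact chain n hn5 imp _ (n - 1 - 4) 4 (by omega) (by omega) (by omega) _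

end AuxNPB

/-- For every `n ≥ 3` (here `n = m + 3`), the NPB Active Player Draft mechanism
fails respecting improvement: there are strict profiles `pref'` and `pref` and a
club `i` such that `pref` is an improvement for `i` with respect to `pref'`, yet
`i` strictly prefers its assignment at `pref'` to its assignment at `pref`. -/
theorem npb_fails_RI (m : ℕ) :
    ∃ (pref' pref : Fin (m + 3) → Fin (m + 3) → Fin (m + 3) → Prop) (i : Fin (m + 3)),
      StrictProfile pref' ∧ StrictProfile pref ∧ Improvement pref' pref i ∧
      pref i (npb pref' i) (npb pref i) := by
  have hn : 3 ≤ m + 3 := by omega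
  refine ⟨prefM (m + 3) false, prefM (m + 3) true, ⟨0, by omega⟩,
    strict_prefM _ _, strict_prefM _ _, improvement_prefM _ hn, ?_⟩
  rw [npb_eval (m + 3) hn false, npb_eval (m + 3) hn true]
  show rkM (m + 3) true 0 (if (false : Bool) = true then 2 else 1)
      < rkM (m + 3) true 0 (if (true : Bool) = true then 2 else 1)
  norm_num [rkM]
end
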